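/- arXiv:1401.5092 — 6 statements merged into one kernel-verified Lean document; each statement's English description precedes it below -/
import Mathlib

section
/- For fixed real constants c > 0, a ∈ ℝ, and v > 0, the function g(x, y) = x + c²y + 1 − (c x + a √v)² / (c² x + v) is jointly concave on {(x, y) : x ≥ 0, y ≥ 0}. -/
theorem genie_variance_jointly_concave
    (c a v : ℝ) (hc : 0 < c) (hv : 0 < v)
    (x y x' y' l : ℝ)
    (hx : 0 ≤ x) (hy : 0 ≤ y) (hx' : 0 ≤ x') (hy' : 0 ≤ y')
    (hl0 : 0 ≤ l) (hl1 : l ≤ 1) :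
    l * (x + c ^ 2 * y + 1 - (c * x + a * Real.sqrt v) ^ 2 / (c ^ 2 * x + v)) +
      (1 - l) * (x' + c ^ 2 * y' + 1 -
        (c * x' + a * Real.sqrt v) ^ 2 / (c ^ 2 * x' + v)) ≤
    (l * x + (1 - l) * x') + c ^ 2 * (l * y + (1 - l) * y') + 1 -
      (c * (l * x + (1 - l) * x') + a * Real.sqrt v) ^ 2 /
        (c ^ 2 * (l * x + (1 - l) * x') + v) := by
  set A := c * x + a * Real.sqrt v with hA
  set A' := c * x' + a * Real.sqrt v with hA'
  have hu : 0 < c ^ 2 * x + v := by positivity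
  have hu' : 0 < c ^ 2 * x' + v := by positivity
  have hcx : 0 ≤ l * x + (1 - l) * x' :=
    add_nonneg (mul_nonneg hl0 hx) (mul_nonneg (by linarith) hx')
  have hw : 0 < c ^ 2 * (l * x + (1 - l) * x') + v := by positivity
  have hB : c * (l * x + (1 - l) * x') + a * Real.sqrt v = l * A + (1 - l) * A' := by
    rw [hA, hA']; ring
  rw [hB]
  have key : (l * A + (1 - l) * A') ^ 2 / (c ^ 2 * (l * x + (1 - l) * x') + v) ≤
      l * (A ^ 2 / (c ^ 2 * x + v)) + (1 - l) * (A' ^ 2 / (c ^ 2 * x' + v)) := by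
    rw [← mul_div_assoc, ← mul_div_assoc, div_add_div _ _ hu.ne' hu'.ne',
      div_le_div_iff₀ hw (mul_pos hu hu')]
    nlinarith [sq_nonneg (A * (c ^ 2 * x' + v) - A' * (c ^ 2 * x + v)),
      mul_nonneg hl0 (sub_nonneg.mpr hl1)]
  have e : l * (x + c ^ 2 * y + 1 - A ^ 2 / (c ^ 2 * x + v)) +
      (1 - l) * (x' + c ^ 2 * y' + 1 - A' ^ 2 / (c ^ 2 * x' + v)) =
      (l * x + (1 - l) * x') + c ^ 2 * (l * y + (1 - l) * y') + 1 -
        (l * (A ^ 2 / (c ^ 2 * x + v)) + (1 - l) * (A' ^ 2 / (c ^ 2 * x' + v))) := by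
    ring
  rw [e]
  linarith [key]
end

section
/- Fix real numbers s, u with 0 ≤ s ≤ u ≤ 1. The function g(t) = t − (1/2)·log(e^{2t} + 2πe·(u − s)) − (1/2)·log(e^{2t} + 2πe·(1 − s)) is monotonically nondecreasing on the set {t : t ≤ (1/4)·log((2πe)²·(u − s)·(1 − s))}. -/
/-!
With `x = exp (2 t)` the function equals `-(1/2) * log (x + a * b / x + (a + b))`, where
`a = 2πe (u - s)` and `b = 2πe (1 - s)`. Since `x ↦ x + c / x` decreases on `(0, √c]` and
`t ≤ (1/4) log (a b)` means exactly `x ≤ √(a b)`, the function increases there.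
-/

open Real Set

lemma add_div_antitoneOn_Ioc_sqrt (c : ℝ) : AntitoneOn (fun x : ℝ => x + c / x) (Ioc 0 √c) := by
  rintro x ⟨hx, hxc⟩ y ⟨hy, hyc⟩ hxy
  have hc : 0 ≤ c := (sqrt_pos.mp (hx.trans_le hxc)).le
  have hxy_le : x * y ≤ c :=
    calc x * y ≤ √c * √c := mul_le_mul hxc hyc hy.le (sqrt_nonneg c)
      _ = c := mul_self_sqrt hc
  have hdiff : y + c / y - (x + c / x) = (y - x) * (x * y - c) / (x * y) := by
    field_simp
    ring
  have : (y - x) * (x * y - c) / (x * y) ≤ 0 :=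
    div_nonpos_of_nonpos_of_nonneg
      (mul_nonpos_of_nonneg_of_nonpos (sub_nonneg.mpr hxy) (sub_nonpos.mpr hxy_le))
      (mul_pos hx hy).le
  show y + c / y ≤ x + c / x
  linarith

lemma exp_two_mul_le_sqrt_of_le {c t : ℝ} (hc : 0 < c) (ht : t ≤ (1 / 4) * log c) :
    exp (2 * t) ≤ √c := by
  calc exp (2 * t) ≤ exp (log c / 2) := exp_le_exp.mpr (by linarith)
    _ = √c := by rw [exp_half, exp_log hc]

lemma sub_half_log_sub_half_log_eq {a b : ℝ} (ha : 0 ≤ a) (hb : 0 ≤ b) (t : ℝ) :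
    t - (1 / 2) * log (exp (2 * t) + a) - (1 / 2) * log (exp (2 * t) + b) =
      -(1 / 2) * log (exp (2 * t) + a * b / exp (2 * t) + (a + b)) := by
  have hx := exp_pos (2 * t)
  have hprod : exp (2 * t) + a * b / exp (2 * t) + (a + b) =
      (exp (2 * t) + a) * (exp (2 * t) + b) / exp (2 * t) := by
    field_simp
    ring
  rw [hprod, log_div (by positivity) hx.ne', log_mul (by positivity) (by positivity), log_exp]
  ring

theorem monotoneOn_sub_half_log_exp_add {a b : ℝ} (ha : 0 < a) (hb : 0 < b) :
    MonotoneOn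
      (fun t : ℝ => t - (1 / 2) * log (exp (2 * t) + a) - (1 / 2) * log (exp (2 * t) + b))
      {t : ℝ | t ≤ (1 / 4) * log (a * b)} := by
  intro t₁ ht₁ t₂ ht₂ ht
  simp only [sub_half_log_sub_half_log_eq ha.le hb.le]
  have hmem : ∀ t ∈ {t : ℝ | t ≤ (1 / 4) * log (a * b)}, exp (2 * t) ∈ Ioc 0 √(a * b) :=
    fun t ht => ⟨exp_pos _, exp_two_mul_le_sqrt_of_le (mul_pos ha hb) ht⟩
  have hanti := add_div_antitoneOn_Ioc_sqrt (a * b) (hmem t₁ ht₁) (hmem t₂ ht₂)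
    (exp_le_exp.mpr (by linarith))
  have hpos : 0 < exp (2 * t₂) + a * b / exp (2 * t₂) + (a + b) := by positivity
  have hlog : log (exp (2 * t₂) + a * b / exp (2 * t₂) + (a + b)) ≤
      log (exp (2 * t₁) + a * b / exp (2 * t₁) + (a + b)) :=
    log_le_log hpos (by dsimp only at hanti; linarith)
  linarith

theorem g_monotone_on_low_range_general
    (s u : ℝ)
    (hus : 0 < u - s) (h1s : 0 < 1 - s) :
    MonotoneOn
      (fun t : ℝ => t -
        (1 / 2) * Real.log (Real.exp (2 * t) + 2 * Real.pi * Real.exp 1 * (u - s)) -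
        (1 / 2) * Real.log (Real.exp (2 * t) + 2 * Real.pi * Real.exp 1 * (1 - s)))
      {t : ℝ | t ≤ (1 / 4) * Real.log ((2 * Real.pi * Real.exp 1) ^ 2 * (u - s) * (1 - s))} := by
  have hc : 0 < 2 * π * exp 1 := by positivity
  have hprod : (2 * π * exp 1) ^ 2 * (u - s) * (1 - s) =
      (2 * π * exp 1 * (u - s)) * (2 * π * exp 1 * (1 - s)) := by ring
  rw [hprod]
  exact monotoneOn_sub_half_log_exp_add (mul_pos hc hus) (mul_pos hc h1s)

theorem g_monotone_on_low_range
    (s u : ℝ) (hs : 0 ≤ s) (hsu : s ≤ u) (hu : u ≤ 1)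
    (hus : 0 < u - s) (h1s : 0 < 1 - s) :
    MonotoneOn
      (fun t : ℝ => t -
        (1 / 2) * Real.log (Real.exp (2 * t) + 2 * Real.pi * Real.exp 1 * (u - s)) -
        (1 / 2) * Real.log (Real.exp (2 * t) + 2 * Real.pi * Real.exp 1 * (1 - s)))
      {t : ℝ | t ≤ (1 / 4) * Real.log ((2 * Real.pi * Real.exp 1) ^ 2 * (u - s) * (1 - s))} :=
  g_monotone_on_low_range_general s u hus h1s
end

section
/- Let X₁ and X₂ be square-integrable real random variables that are conditionally independent given a random variable W. Then E[(X₁ − E[X₁])(X₂ − E[X₂])] ≤ sqrt((Var(X₁) − E[Var(X₁|W)])·(Var(X₂) − E[Var(X₂|W)])). -/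
/-!
Conditioning on `W` replaces `Xₖ` by `Yₖ := E[Xₖ|W]` without changing the covariance: the means
agree by the tower property, and so do the mixed moments because
`E[X₁X₂] = E[E[X₁X₂|W]] = E[Y₁Y₂]` by conditional independence. By the law of total variance,
`Var(Xₖ) − E[Var(Xₖ|W)] = Var(Yₖ)`, so the claim is the Cauchy–Schwarz inequality
`Cov(Y₁, Y₂) ≤ √(Var(Y₁) Var(Y₂))`.
-/

open MeasureTheory ProbabilityTheory

section CauchySchwarz

variable {Ω : Type*} [MeasurableSpace Ω] {μ : Measure Ω} {f g : Ω → ℝ}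

lemma integral_mul_eq_inner_toLp (hf : MemLp f 2 μ) (hg : MemLp g 2 μ) :
    ∫ ω, f ω * g ω ∂μ = inner ℝ (hf.toLp f) (hg.toLp g) := by
  rw [L2.inner_def]
  refine integral_congr_ae ?_
  filter_upwards [hf.coeFn_toLp, hg.coeFn_toLp] with ω hfω hgω
  simp [hfω, hgω, mul_comm]

lemma integral_sq_eq_norm_toLp_sq (hf : MemLp f 2 μ) :
    ∫ ω, f ω ^ 2 ∂μ = ‖hf.toLp f‖ ^ 2 := by
  simp_rw [sq, integral_mul_eq_inner_toLp hf hf, real_inner_self_eq_norm_mul_norm]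

lemma integral_mul_le_sqrt_integral_sq_mul (hf : MemLp f 2 μ) (hg : MemLp g 2 μ) :
    ∫ ω, f ω * g ω ∂μ ≤ √((∫ ω, f ω ^ 2 ∂μ) * ∫ ω, g ω ^ 2 ∂μ) := by
  rw [integral_mul_eq_inner_toLp hf hg, integral_sq_eq_norm_toLp_sq hf,
    integral_sq_eq_norm_toLp_sq hg, ← mul_pow, Real.sqrt_sq (by positivity)]
  exact real_inner_le_norm _ _

end CauchySchwarz

namespace ProbabilityTheory

variable {Ω : Type*} {m m₀ : MeasurableSpace Ω} {μ : Measure Ω} {X Y : Ω → ℝ}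

lemma covariance_le_sqrt_variance_mul [IsFiniteMeasure μ] (hX : MemLp X 2 μ) (hY : MemLp Y 2 μ) :
    cov[X, Y; μ] ≤ √(Var[X; μ] * Var[Y; μ]) := by
  rw [variance_eq_integral hX.aemeasurable, variance_eq_integral hY.aemeasurable]
  exact integral_mul_le_sqrt_integral_sq_mul (hX.sub (memLp_const _)) (hY.sub (memLp_const _))

lemma covariance_condExp_eq [IsProbabilityMeasure μ] (hm : m ≤ m₀)
    (hX : MemLp X 2 μ) (hY : MemLp Y 2 μ)
    (hXY : μ[fun ω => X ω * Y ω | m] =ᵐ[μ] fun ω => μ[X | m] ω * μ[Y | m] ω) :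
    cov[μ[X | m], μ[Y | m]; μ] = cov[X, Y; μ] := by
  have hmixed : ∫ ω, μ[X | m] ω * μ[Y | m] ω ∂μ = ∫ ω, X ω * Y ω ∂μ := by
    rw [← integral_congr_ae hXY, integral_condExp hm]
  rw [covariance_eq_sub (hX.condExp one_le_two) (hY.condExp one_le_two), covariance_eq_sub hX hY,
    integral_condExp hm, integral_condExp hm]
  exact congrArg (· - _) hmixed

lemma variance_condExp_eq_sub_integral [IsProbabilityMeasure μ] (hm : m ≤ m₀)
    (hX : MemLp X 2 μ) :
    Var[μ[X | m]; μ] = (∫ ω, X ω ^ 2 ∂μ - (∫ ω, X ω ∂μ) ^ 2) -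
      ∫ ω, (μ[fun ω => X ω ^ 2 | m] ω - μ[X | m] ω ^ 2) ∂μ := by
  have htotal := integral_condVar_add_variance_condExp hm hX
  rw [integral_congr_ae (condVar_ae_eq_condExp_sq_sub_sq_condExp hm hX), variance_eq_sub hX]
    at htotal
  simp only [Pi.sub_apply, Pi.pow_apply] at htotal
  exact eq_sub_of_add_eq' htotal

end ProbabilityTheory

theorem cross_covariance_le_sqrt
    {Ω β : Type*} [MeasurableSpace Ω] {mβ : MeasurableSpace β}
    (μ : Measure Ω) [IsProbabilityMeasure μ]
    (X1 X2 : Ω → ℝ) (W : Ω → β)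
    (hX1 : MemLp X1 2 μ) (hX2 : MemLp X2 2 μ) (hW : Measurable W)
    (hcondindep :
      condExp (MeasurableSpace.comap W mβ) μ (fun ω => X1 ω * X2 ω) =ᵐ[μ]
        fun ω => condExp (MeasurableSpace.comap W mβ) μ X1 ω *
          condExp (MeasurableSpace.comap W mβ) μ X2 ω) :
    ∫ ω, (X1 ω - ∫ x, X1 x ∂μ) * (X2 ω - ∫ x, X2 x ∂μ) ∂μ ≤
      Real.sqrt
        (((∫ x, (X1 x) ^ 2 ∂μ - (∫ x, X1 x ∂μ) ^ 2) -
            ∫ ω, (condExp (MeasurableSpace.comap W mβ) μ (fun y => (X1 y) ^ 2) ω -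
              (condExp (MeasurableSpace.comap W mβ) μ X1 ω) ^ 2) ∂μ) *
          ((∫ x, (X2 x) ^ 2 ∂μ - (∫ x, X2 x ∂μ) ^ 2) -
            ∫ ω, (condExp (MeasurableSpace.comap W mβ) μ (fun y => (X2 y) ^ 2) ω -
              (condExp (MeasurableSpace.comap W mβ) μ X2 ω) ^ 2) ∂μ)) := by
  have hm := hW.comap_le
  rw [← variance_condExp_eq_sub_integral hm hX1, ← variance_condExp_eq_sub_integral hm hX2]
  change cov[X1, X2; μ] ≤ _
  rw [← covariance_condExp_eq hm hX1 hX2 hcondindep]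
  exact covariance_le_sqrt_variance_mul (hX1.condExp one_le_two) (hX2.condExp one_le_two)
end

section
/- Let c > 0 and P > 0 be such that (c⁴ + 2c³ + c²)P + c² + 2c − 1 ≤ 0. Then the function R(P₀) = (1/2)·(log(1 + ((P − P₀) + (1+c)²P₀)/(c²(P − P₀) + 1)) + log(1 + (P − P₀)/(c²(P − P₀) + 1))) is monotonically nonincreasing in P₀ on the interval [0, P], and hence is maximized at P₀ = 0. -/
set_option maxHeartbeats 1000000 in
/-- Key polynomial inequality. -/
lemma key_poly (c P x y : ℝ) (hc : 0 < c) (hP : 0 < P)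
    (hcond : (c ^ 4 + 2 * c ^ 3 + c ^ 2) * P + c ^ 2 + 2 * c - 1 ≤ 0)
    (hx : 0 ≤ x) (hxy : x ≤ y) (hy : y ≤ P) :
    ((((c^2+1)*P+1) + 2*c*y) * (((c^2+1)*P+1) - (c^2+1)*y)) * ((c^2*P+1) - c^2*x)^2 ≤
    ((((c^2+1)*P+1) + 2*c*x) * (((c^2+1)*P+1) - (c^2+1)*x)) * ((c^2*P+1) - c^2*y)^2 := by
  set K := (c^2+1)*P+1 with hK
  set M := c^2*P+1 with hM
  have hKpos : 0 < K := by positivity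
  have hMpos : 0 < M := by positivity
  have hQ0 : 2*c^2*K - (c-1)^2*M ≤ 0 := by
    have : 2*c^2*K - (c-1)^2*M = (c ^ 4 + 2 * c ^ 3 + c ^ 2) * P + c ^ 2 + 2 * c - 1 := by
      rw [hK, hM]; ring
    linarith
  -- key bound: T*x*y ≤ S*(x+y)
  have h2xy : 2*(x*y) ≤ P*(x+y) := by nlinarith [mul_nonneg hx (sub_nonneg.2 hy), mul_nonneg (hx.trans hxy) (sub_nonneg.2 (hxy.trans hy))]
  have hKP : (c-1)^2*P ≤ 2*K := by nlinarith [sq_nonneg c, sq_nonneg (c-1), mul_pos hc hP]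
  have hMP : c^2*P ≤ M := by rw [hM]; linarith
  have hT : 0 ≤ (c-1)^2*K*c^4 + 4*c^3*(c^2+1)*M := by positivity
  have hS : 0 ≤ c^4*K^2 + 2*c*(c^2+1)*M^2 := by positivity
  have hTP : ((c-1)^2*K*c^4 + 4*c^3*(c^2+1)*M)*P ≤ 2*(c^4*K^2 + 2*c*(c^2+1)*M^2) := by
    have h1 : c^4*((c-1)^2*P)*K ≤ c^4*(2*K)*K := by
      have := mul_le_mul_of_nonneg_right hKP hKpos.le
      nlinarith [pow_pos hc 4]
    have h2 : 4*c^3*(c^2+1)*M*P = 4*c*(c^2+1)*M*(c^2*P) := by ring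
    have h3 : 4*c*(c^2+1)*M*(c^2*P) ≤ 4*c*(c^2+1)*M*M := by
      have hm : 0 ≤ 4*c*(c^2+1)*M := by positivity
      exact mul_le_mul_of_nonneg_left hMP hm
    nlinarith
  have hxys : 0 ≤ x + y := by linarith
  have hTxy : ((c-1)^2*K*c^4 + 4*c^3*(c^2+1)*M)*(x*y) ≤ (c^4*K^2 + 2*c*(c^2+1)*M^2)*(x+y) := by
    nlinarith [mul_le_mul_of_nonneg_right hTP hxys, mul_le_mul_of_nonneg_left h2xy hT]
  have hQ : K*M*(2*c^2*K - (c-1)^2*M) - (c^4*K^2 + 2*c*(c^2+1)*M^2)*(x+y)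
      + ((c-1)^2*K*c^4 + 4*c^3*(c^2+1)*M)*(x*y) ≤ 0 := by
    nlinarith [mul_pos hKpos hMpos, mul_nonpos_of_nonneg_of_nonpos (mul_pos hKpos hMpos).le hQ0]
  have hE : ((K + 2*c*x) * (K - (c^2+1)*x)) * (M - c^2*y)^2
      - ((K + 2*c*y) * (K - (c^2+1)*y)) * (M - c^2*x)^2
      = (y - x) * (-(K*M*(2*c^2*K - (c-1)^2*M) - (c^4*K^2 + 2*c*(c^2+1)*M^2)*(x+y)
          + ((c-1)^2*K*c^4 + 4*c^3*(c^2+1)*M)*(x*y))) := by ring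
  nlinarith [mul_nonneg (sub_nonneg.2 hxy) (neg_nonneg.2 hQ)]

theorem sum_rate_nonincreasing (c P : ℝ) (hc : 0 < c) (hP : 0 < P)
    (hcond : (c ^ 4 + 2 * c ^ 3 + c ^ 2) * P + c ^ 2 + 2 * c - 1 ≤ 0) :
    (AntitoneOn
      (fun P0 : ℝ => (1 / 2) *
        (Real.log (1 + ((P - P0) + (1 + c) ^ 2 * P0) / (c ^ 2 * (P - P0) + 1)) +
         Real.log (1 + (P - P0) / (c ^ 2 * (P - P0) + 1))))
      (Set.Icc 0 P)) ∧
    ∀ P0 ∈ Set.Icc (0 : ℝ) P,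
      (1 / 2) *
        (Real.log (1 + ((P - P0) + (1 + c) ^ 2 * P0) / (c ^ 2 * (P - P0) + 1)) +
         Real.log (1 + (P - P0) / (c ^ 2 * (P - P0) + 1))) ≤
      (1 / 2) *
        (Real.log (1 + ((P - 0) + (1 + c) ^ 2 * 0) / (c ^ 2 * (P - 0) + 1)) +
         Real.log (1 + (P - 0) / (c ^ 2 * (P - 0) + 1))) := by
  have hanti : AntitoneOn
      (fun P0 : ℝ => (1 / 2) *
        (Real.log (1 + ((P - P0) + (1 + c) ^ 2 * P0) / (c ^ 2 * (P - P0) + 1)) +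
         Real.log (1 + (P - P0) / (c ^ 2 * (P - P0) + 1))))
      (Set.Icc 0 P) := by
    intro x hx y hy hxy
    obtain ⟨hx0, hxP⟩ := hx
    obtain ⟨hy0, hyP⟩ := hy
    -- positivity of denominators and numerators
    have hDx : (0:ℝ) < c ^ 2 * (P - x) + 1 := by nlinarith [sq_nonneg c, mul_nonneg (sq_nonneg c) (sub_nonneg.2 hxP)]
    have hDy : (0:ℝ) < c ^ 2 * (P - y) + 1 := by nlinarith [mul_nonneg (sq_nonneg c) (sub_nonneg.2 hyP)]
    have hux : (0:ℝ) ≤ (P - x) + (1 + c) ^ 2 * x := by nlinarith [mul_nonneg (sq_nonneg (1+c)) hx0]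
    have huy : (0:ℝ) ≤ (P - y) + (1 + c) ^ 2 * y := by nlinarith [mul_nonneg (sq_nonneg (1+c)) hy0]
    have hvx : (0:ℝ) ≤ P - x := sub_nonneg.2 hxP
    have hvy : (0:ℝ) ≤ P - y := sub_nonneg.2 hyP
    have hAx : (0:ℝ) < (c ^ 2 * (P - x) + 1) + ((P - x) + (1 + c) ^ 2 * x) := by linarith
    have hAy : (0:ℝ) < (c ^ 2 * (P - y) + 1) + ((P - y) + (1 + c) ^ 2 * y) := by linarith
    have hBx : (0:ℝ) < (c ^ 2 * (P - x) + 1) + (P - x) := by linarith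
    have hBy : (0:ℝ) < (c ^ 2 * (P - y) + 1) + (P - y) := by linarith
    -- rewrite 1 + u/D = (D+u)/D
    have hr : ∀ u D : ℝ, D ≠ 0 → 1 + u / D = (D + u) / D := by
      intro u D hD; field_simp
    simp only []
    rw [hr _ _ hDx.ne', hr _ _ hDx.ne', hr _ _ hDy.ne', hr _ _ hDy.ne']
    rw [Real.log_div hAx.ne' hDx.ne', Real.log_div hBx.ne' hDx.ne',
        Real.log_div hAy.ne' hDy.ne', Real.log_div hBy.ne' hDy.ne']
    have hgoal : Real.log ((c ^ 2 * (P - y) + 1) + ((P - y) + (1 + c) ^ 2 * y))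
        + Real.log ((c ^ 2 * (P - y) + 1) + (P - y))
        + 2 * Real.log (c ^ 2 * (P - x) + 1)
        ≤ Real.log ((c ^ 2 * (P - x) + 1) + ((P - x) + (1 + c) ^ 2 * x))
        + Real.log ((c ^ 2 * (P - x) + 1) + (P - x))
        + 2 * Real.log (c ^ 2 * (P - y) + 1) := by
      have e1 : Real.log ((c ^ 2 * (P - y) + 1) + ((P - y) + (1 + c) ^ 2 * y))
          + Real.log ((c ^ 2 * (P - y) + 1) + (P - y))
          + 2 * Real.log (c ^ 2 * (P - x) + 1)
          = Real.log ((((c ^ 2 * (P - y) + 1) + ((P - y) + (1 + c) ^ 2 * y))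
              * ((c ^ 2 * (P - y) + 1) + (P - y))) * (c ^ 2 * (P - x) + 1)^2) := by
        rw [Real.log_mul (by positivity) (by positivity), Real.log_mul hAy.ne' hBy.ne',
            Real.log_pow]
        push_cast; ring
      have e2 : Real.log ((c ^ 2 * (P - x) + 1) + ((P - x) + (1 + c) ^ 2 * x))
          + Real.log ((c ^ 2 * (P - x) + 1) + (P - x))
          + 2 * Real.log (c ^ 2 * (P - y) + 1)
          = Real.log ((((c ^ 2 * (P - x) + 1) + ((P - x) + (1 + c) ^ 2 * x))
              * ((c ^ 2 * (P - x) + 1) + (P - x))) * (c ^ 2 * (P - y) + 1)^2) := by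
        rw [Real.log_mul (by positivity) (by positivity), Real.log_mul hAx.ne' hBx.ne',
            Real.log_pow]
        push_cast; ring
      rw [e1, e2]
      apply Real.log_le_log (by positivity)
      have hkey := key_poly c P x y hc hP hcond hx0 hxy hyP
      have hAeq : ∀ t : ℝ, (c ^ 2 * (P - t) + 1) + ((P - t) + (1 + c) ^ 2 * t)
          = (((c^2+1)*P+1) + 2*c*t) := by intro t; ring
      have hBeq : ∀ t : ℝ, (c ^ 2 * (P - t) + 1) + (P - t)
          = (((c^2+1)*P+1) - (c^2+1)*t) := by intro t; ring
      have hDeq : ∀ t : ℝ, c ^ 2 * (P - t) + 1 = ((c^2*P+1) - c^2*t) := by intro t; ring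
      rw [hAeq x, hAeq y, hBeq x, hBeq y, hDeq x, hDeq y]
      exact hkey
    linarith
  refine ⟨hanti, ?_⟩
  intro P0 hP0
  exact hanti (Set.mem_Icc.2 ⟨le_refl 0, hP.le⟩) hP0 hP0.1
end

section
/- Let c > 0, P₁ > 0, a, b ∈ ℝ with b > 0. Let X̃₁, X̃₂, Z, Z̃ be independent centered Gaussian random variables except that Z = (a/b)·Z̃ + N with N independent of Z̃; assume Var(X̃₁) = Var(X̃₂) = P₁, Var(Z) = 1, Var(Z̃) = b². Then Cov(X̃₁, c·X̃₁ + Z̃) = Cov(X̃₁, X̃₁ + c·X̃₂ + Z)·Var(X̃₁ + c·X̃₂ + Z)⁻¹·Cov(X̃₁ + c·X̃₂ + Z, c·X̃₁ + Z̃) if and only if c·(1 + c²·P₁) = a·b. -/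
open MeasureTheory ProbabilityTheory

/-- Covariance of two real random variables. -/
noncomputable def cov {Ω : Type*} [MeasurableSpace Ω] (μ : Measure Ω) (X Y : Ω → ℝ) : ℝ :=
  ∫ ω, (X ω - ∫ x, X x ∂μ) * (Y ω - ∫ x, Y x ∂μ) ∂μ

/-- Variance of a real random variable. -/
noncomputable def var' {Ω : Type*} [MeasurableSpace Ω] (μ : Measure Ω) (X : Ω → ℝ) : ℝ :=
  ∫ ω, (X ω - ∫ x, X x ∂μ) ^ 2 ∂μ

/-!
Every random variable in the statement is a linear combination of the independent, centred,
square-integrable variables `X̃₁, X̃₂, Z̃, N`, so by bilinearity each covariance is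
`∑ uᵢ wᵢ Var(Xᵢ)`: the two sides of the condition are `c P₁` and
`P₁ (c P₁ + a b) / (P₁ + c² P₁ + 1)`, and clearing the positive denominator leaves
`c (1 + c² P₁) = a b`.
-/

section

variable {Ω : Type*} [MeasurableSpace Ω] {μ : Measure Ω}

lemma cov_eq_covariance (X Y : Ω → ℝ) : cov μ X Y = cov[X, Y; μ] := rfl

lemma var'_eq_cov (X : Ω → ℝ) : var' μ X = cov μ X X := by
  simp only [var', cov, sq]

lemma covariance_fun_sum_mul_fun_sum_mul_of_pairwise [IsFiniteMeasure μ] {ι : Type*} [Fintype ι]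
    {X : ι → Ω → ℝ} (hX : ∀ i, MemLp (X i) 2 μ) (hcov : Pairwise fun i j ↦ cov[X i, X j; μ] = 0)
    (u w : ι → ℝ) :
    cov[fun ω ↦ ∑ i, u i * X i ω, fun ω ↦ ∑ i, w i * X i ω; μ] = ∑ i, u i * w i * Var[X i; μ] := by
  rw [covariance_fun_sum_fun_sum (X := fun i ω ↦ u i * X i ω) (Y := fun i ω ↦ w i * X i ω)
    (fun i ↦ (hX i).const_mul (u i)) (fun i ↦ (hX i).const_mul (w i))]
  refine Finset.sum_congr rfl fun i _ ↦ ?_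
  simp only [covariance_const_mul_left, covariance_const_mul_right]
  rw [Finset.sum_eq_single i (fun j _ hji ↦ by rw [hcov hji.symm, mul_zero, mul_zero]) (by simp),
    covariance_self (hX i).aemeasurable]
  ring

lemma hasLaw_gaussianReal_of_map_eq {X : Ω → ℝ} {m : ℝ} {v : NNReal}
    (h : μ.map X = gaussianReal m v) : HasLaw X (gaussianReal m v) μ :=
  ⟨aemeasurable_of_map_neZero (by rw [h]; infer_instance), h⟩

lemma ProbabilityTheory.iIndepFun.covariance_fun_sum_mul_fun_sum_mul_of_hasLaw_gaussianReal [IsFiniteMeasure μ]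
    {ι : Type*} [Fintype ι] {X : ι → Ω → ℝ} {m : ι → ℝ} {v : ι → NNReal} (hindep : iIndepFun X μ)
    (hX : ∀ i, HasLaw (X i) (gaussianReal (m i) (v i)) μ) (u w : ι → ℝ) :
    cov[fun ω ↦ ∑ i, u i * X i ω, fun ω ↦ ∑ i, w i * X i ω; μ] = ∑ i, u i * w i * v i := by
  have hmem : ∀ i, MemLp (X i) 2 μ := fun i ↦ (hX i).hasGaussianLaw.memLp_two
  rw [covariance_fun_sum_mul_fun_sum_mul_of_pairwise hmem
    (fun i j hij ↦ (hindep.indepFun hij).covariance_eq_zero (hmem i) (hmem j))]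
  simp only [(hX _).variance_eq, variance_id_gaussianReal]

end

lemma mul_eq_mul_inv_mul_iff {c P s : ℝ} (hP : 0 < P) :
    c * P = P * (P + c ^ 2 * P + 1)⁻¹ * (c * P + s) ↔ c * (1 + c ^ 2 * P) = s := by
  have hD : P + c ^ 2 * P + 1 ≠ 0 := by positivity
  rw [mul_comm P, mul_assoc, inv_mul_eq_div, eq_div_iff hD]
  constructor <;> intro h
  · exact mul_left_cancel₀ hP.ne' (by linear_combination h)
  · rw [← h]; ring

theorem markov_chain_iff_smart_genie_general
    {Ω : Type*} [MeasurableSpace Ω] (μ : Measure Ω) [IsProbabilityMeasure μ]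
    (c P₁ a b vN : ℝ) (hP₁ : 0 < P₁) (hb : 0 < b)
    (X1 X2 Zt N : Ω → ℝ)
    (hindep : iIndepFun ![X1, X2, Zt, N] μ)
    (hX1 : Measure.map X1 μ = gaussianReal 0 P₁.toNNReal)
    (hX2 : Measure.map X2 μ = gaussianReal 0 P₁.toNNReal)
    (hZt : Measure.map Zt μ = gaussianReal 0 (b ^ 2).toNNReal)
    (hN : Measure.map N μ = gaussianReal 0 vN.toNNReal)
    (Z : Ω → ℝ) (hZ : Z = fun ω => (a / b) * Zt ω + N ω)
    (hZvar : var' μ Z = 1) :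
    (cov μ X1 (fun ω => c * X1 ω + Zt ω) =
      cov μ X1 (fun ω => X1 ω + c * X2 ω + Z ω) *
        (var' μ (fun ω => X1 ω + c * X2 ω + Z ω))⁻¹ *
        cov μ (fun ω => X1 ω + c * X2 ω + Z ω) (fun ω => c * X1 ω + Zt ω)) ↔
    c * (1 + c ^ 2 * P₁) = a * b := by
  set X : Fin 4 → Ω → ℝ := ![X1, X2, Zt, N]
  have hlaw : ∀ i, HasLaw (X i) (gaussianReal 0 (![P₁, P₁, b ^ 2, vN] i).toNNReal) μ := by
    intro i
    fin_cases i
    exacts [hasLaw_gaussianReal_of_map_eq hX1, hasLaw_gaussianReal_of_map_eq hX2,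
      hasLaw_gaussianReal_of_map_eq hZt, hasLaw_gaussianReal_of_map_eq hN]
  have hcov : ∀ (Y W : Ω → ℝ) (u w : Fin 4 → ℝ), (Y = fun ω ↦ ∑ i, u i * X i ω) →
      (W = fun ω ↦ ∑ i, w i * X i ω) →
      cov μ Y W = ∑ i, u i * w i * (![P₁, P₁, b ^ 2, vN] i).toNNReal := by
    rintro Y W u w rfl rfl
    exact hindep.covariance_fun_sum_mul_fun_sum_mul_of_hasLaw_gaussianReal hlaw u w
  have hY : (fun ω ↦ X1 ω + c * X2 ω + Z ω) = fun ω ↦ ∑ i, ![1, c, a / b, 1] i * X i ω := by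
    ext; simp only [X, hZ, Fin.sum_univ_four, Matrix.cons_val]; ring
  have hW : (fun ω ↦ c * X1 ω + Zt ω) = fun ω ↦ ∑ i, ![c, 0, 1, 0] i * X i ω := by
    ext; simp [X, Fin.sum_univ_four]
  have hX1' : X1 = fun ω ↦ ∑ i, ![1, 0, 0, 0] i * X i ω := by
    ext; simp [X, Fin.sum_univ_four]
  have hZ' : Z = fun ω ↦ ∑ i, ![0, 0, a / b, 1] i * X i ω := by
    ext; simp [X, Fin.sum_univ_four, hZ]
  have hX1W := hcov _ _ _ _ hX1' hW
  have hX1Y := hcov _ _ _ _ hX1' hY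
  have hYY := hcov _ _ _ _ hY hY
  have hYW := hcov _ _ _ _ hY hW
  have hZZ := hcov _ _ _ _ hZ' hZ'
  rw [var'_eq_cov] at hZvar ⊢
  simp only [Fin.sum_univ_four, Matrix.cons_val, Real.coe_toNNReal', max_eq_left hP₁.le,
    max_eq_left (sq_nonneg b), one_mul, mul_one, zero_mul, mul_zero, add_zero, zero_add]
    at hX1W hX1Y hYY hYW hZZ
  have hVarY : cov μ (fun ω ↦ X1 ω + c * X2 ω + Z ω) (fun ω ↦ X1 ω + c * X2 ω + Z ω)
      = P₁ + c ^ 2 * P₁ + 1 := by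
    rw [hYY, ← hZvar, hZZ]; ring
  have hZZt : a / b * b ^ 2 = a * b := by field_simp
  rw [hX1W, hX1Y, hVarY, hYW, hZZt]
  exact mul_eq_mul_inv_mul_iff hP₁

theorem markov_chain_iff_smart_genie
    {Ω : Type*} [MeasurableSpace Ω] (μ : Measure Ω) [IsProbabilityMeasure μ]
    (c P₁ a b vN : ℝ) (hc : 0 < c) (hP₁ : 0 < P₁) (hb : 0 < b)
    (X1 X2 Zt N : Ω → ℝ)
    (hindep : iIndepFun ![X1, X2, Zt, N] μ)
    (hX1 : Measure.map X1 μ = gaussianReal 0 P₁.toNNReal)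
    (hX2 : Measure.map X2 μ = gaussianReal 0 P₁.toNNReal)
    (hZt : Measure.map Zt μ = gaussianReal 0 (b ^ 2).toNNReal)
    (hN : Measure.map N μ = gaussianReal 0 vN.toNNReal)
    (Z : Ω → ℝ) (hZ : Z = fun ω => (a / b) * Zt ω + N ω)
    (hZvar : var' μ Z = 1) :
    (cov μ X1 (fun ω => c * X1 ω + Zt ω) =
      cov μ X1 (fun ω => X1 ω + c * X2 ω + Z ω) *
        (var' μ (fun ω => X1 ω + c * X2 ω + Z ω))⁻¹ *
        cov μ (fun ω => X1 ω + c * X2 ω + Z ω) (fun ω => c * X1 ω + Zt ω)) ↔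
    c * (1 + c ^ 2 * P₁) = a * b :=
  markov_chain_iff_smart_genie_general μ c P₁ a b vN hP₁ hb X1 X2 Zt N hindep hX1 hX2 hZt hN Z hZ
    hZvar
end

section
/- Let c > 0, P ≥ 0 and suppose nonnegative a, b satisfy c(1 + c²P) = ab, a² + b² ≤ 1, and c²P ≤ sqrt((1 − a² − b²)(1 − b²)) − b². Then for every P₁ with 0 ≤ P₁ ≤ P, there exist nonnegative a', b' satisfying c(1 + c²P₁) = a'·b', (a')² + (b')² ≤ 1, and c²P₁ ≤ sqrt((1 − (a')² − (b')²)(1 − (b')²)) − (b')². -/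
theorem genie_conditions_monotone_in_power (c P : ℝ) (hc : 0 < c) (hP : 0 ≤ P)
    (a b : ℝ) (ha : 0 ≤ a) (hb : 0 ≤ b)
    (h1 : c * (1 + c ^ 2 * P) = a * b)
    (h2 : a ^ 2 + b ^ 2 ≤ 1)
    (h3 : c ^ 2 * P ≤ Real.sqrt ((1 - a ^ 2 - b ^ 2) * (1 - b ^ 2)) - b ^ 2) :
    ∀ P₁ : ℝ, 0 ≤ P₁ → P₁ ≤ P →
      ∃ a' b' : ℝ, 0 ≤ a' ∧ 0 ≤ b' ∧
        c * (1 + c ^ 2 * P₁) = a' * b' ∧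
        a' ^ 2 + b' ^ 2 ≤ 1 ∧
        0 ≤ 1 - a' ^ 2 - b' ^ 2 ∧
        c ^ 2 * P₁ ≤ Real.sqrt ((1 - a' ^ 2 - b' ^ 2) * (1 - b' ^ 2)) - b' ^ 2 := by
  intro P₁ hP₁ hP₁P
  have hcp : (0:ℝ) < c * (1 + c ^ 2 * P) := by
    have : (0:ℝ) < 1 + c ^ 2 * P := by nlinarith [sq_nonneg c, mul_nonneg (sq_nonneg c) hP]
    exact mul_pos hc this
  have hab : 0 < a * b := h1 ▸ hcp
  have ha0 : 0 < a := by nlinarith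
  have hb0 : 0 < b := by nlinarith
  have hb1 : b ^ 2 < 1 := by nlinarith
  -- nonnegativity of 1 - a^2 - b^2
  have hkey : 0 ≤ 1 - a ^ 2 - b ^ 2 := by
    by_contra h
    push_neg at h
    have hneg : (1 - a ^ 2 - b ^ 2) * (1 - b ^ 2) ≤ 0 := by nlinarith
    have hs : Real.sqrt ((1 - a ^ 2 - b ^ 2) * (1 - b ^ 2)) = 0 :=
      Real.sqrt_eq_zero_of_nonpos hneg
    rw [hs] at h3
    nlinarith
  set b' := c * (1 + c ^ 2 * P₁) / a with hb'def
  have hb'0 : 0 ≤ b' := by positivity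
  have hb'le : b' ≤ b := by
    rw [hb'def, div_le_iff₀ ha0]
    have h4 : c ^ 2 * P₁ ≤ c ^ 2 * P := mul_le_mul_of_nonneg_left hP₁P (sq_nonneg c)
    nlinarith [mul_le_mul_of_nonneg_left h4 hc.le]
  refine ⟨a, b', ha, hb'0, ?_, ?_, ?_, ?_⟩
  · rw [hb'def, mul_div_cancel₀ _ (ne_of_gt ha0)]
  · nlinarith
  · nlinarith
  have hmono : (1 - a ^ 2 - b ^ 2) * (1 - b ^ 2) ≤
      (1 - a ^ 2 - b' ^ 2) * (1 - b' ^ 2) := by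
    have hbsq : b' ^ 2 ≤ b ^ 2 := by nlinarith
    nlinarith [mul_nonneg (sub_nonneg.2 hbsq) hkey,
      mul_nonneg (sub_nonneg.2 hbsq) (sub_nonneg.2 hb1.le)]
  have hsq := Real.sqrt_le_sqrt hmono
  have hPle : c ^ 2 * P₁ ≤ c ^ 2 * P := by nlinarith
  nlinarith [hsq, h3, hPle]
end
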